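/- arXiv:1703.10705 — 3 statements merged into one kernel-verified Lean document; each statement's English description precedes it below -/
import Mathlib

section
/- Let f : ℤⁿ → ℝ ∪ {+∞} be integrally convex with dom f ⊆ ℤ₊ⁿ containing 0, α a positive integer, and suppose f(0) ≤ f(α·𝟙_A) for all A ⊆ {1,…,n}. Then for every nonempty A ⊆ {1,…,n} and every λ ∈ ℤ₊, one has (α−1)·𝟙_A ≤ (α−1+λ)·𝟙_A and f((α−1)·𝟙_A) ≤ f((α−1+λ)·𝟙_A). -/
open scoped BigOperators

noncomputable section

/-- Integer neighborhood `N(x)` of a real point. -/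
def intNbhd {n : ℕ} (x : Fin n → ℝ) : Set (Fin n → ℤ) :=
  {z | ∀ i, |x i - (z i : ℝ)| < 1}

/-- Local convex extension of `f : ℤⁿ → ℝ ∪ {+∞}`. -/
noncomputable def localExt {n : ℕ} (f : (Fin n → ℤ) → EReal) (x : Fin n → ℝ) : EReal :=
  sInf { v : EReal | ∃ (m : ℕ) (lam : Fin m → ℝ) (y : Fin m → (Fin n → ℤ)),
      (∀ j, 0 ≤ lam j) ∧ (∑ j, lam j) = 1 ∧ (∀ j, y j ∈ intNbhd x) ∧
      (∀ i, (∑ j, lam j * ((y j i : ℝ))) = x i) ∧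
      v = ∑ j, (((lam j : ℝ) : EReal) * f (y j)) }

/-- A function is integrally convex if its local convex extension is convex. -/
def IsIntegrallyConvexFn {n : ℕ} (f : (Fin n → ℤ) → EReal) : Prop :=
  ∀ x y : Fin n → ℝ, ∀ t : ℝ, 0 ≤ t → t ≤ 1 →
    localExt f (fun i => t * x i + (1 - t) * y i) ≤
      ((t : ℝ) : EReal) * localExt f x + (((1 - t : ℝ)) : EReal) * localExt f y

/-- Coercion of an integer point to a real point. -/
def realify {n : ℕ} (z : Fin n → ℤ) : Fin n → ℝ := fun i => (z i : ℝ)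

/-- A set `S ⊆ ℤⁿ` is integrally convex. -/
def IsIntegrallyConvexSet {n : ℕ} (S : Set (Fin n → ℤ)) : Prop :=
  ∀ x : Fin n → ℝ, x ∈ convexHull ℝ (realify '' S) →
    x ∈ convexHull ℝ (realify '' (S ∩ intNbhd x))

/-!
At integer points the local convex extension coincides with `f`, so integral convexity gives
the convexity inequality for `g k = f (k • 𝟙_A)` on `ℤ`. For such a discrete convex `g`,
`g 0 ≤ g α` forces `g (α - 1) ≤ g α`, and a convex function that does not decrease on
`[α - 1, α]` does not decrease afterwards. The last step needs `g α < ⊤`, which follows from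
`g 0 < ⊤` whenever `g (α - 1 + λ) < ⊤`.
-/

open Finset

namespace EReal

lemma sum_coe_mul_of_nonneg {ι : Type*} (s : Finset ι) {w : ι → ℝ} (hw : ∀ i ∈ s, 0 ≤ w i)
    (x : EReal) : ∑ i ∈ s, (w i : EReal) * x = ((∑ i ∈ s, w i : ℝ) : EReal) * x := by
  induction s using Finset.cons_induction with
  | empty => simp
  | cons i s _ ih =>
    rw [sum_cons, sum_cons, EReal.coe_add,
      right_distrib_of_nonneg (EReal.coe_nonneg.2 (hw i (mem_cons_self i s)))
        (EReal.coe_nonneg.2 (sum_nonneg fun j hj => hw j (mem_cons_of_mem hj))),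
      ih fun j hj => hw j (mem_cons_of_mem hj)]

lemma coe_mul_add_coe_one_sub_mul {t : ℝ} (ht0 : 0 ≤ t) (ht1 : t ≤ 1) (x : EReal) :
    (t : EReal) * x + ((1 - t : ℝ) : EReal) * x = x := by
  rw [← right_distrib_of_nonneg (EReal.coe_nonneg.2 ht0)
      (EReal.coe_nonneg.2 (_root_.sub_nonneg.2 ht1)),
    ← EReal.coe_add, add_sub_cancel, EReal.coe_one, one_mul]

lemma coe_le_of_le_coe_mul_add {y : ℝ} {z : EReal} {s : ℝ} (hs : s < 1)
    (h : (y : EReal) ≤ (s : EReal) * y + ((1 - s : ℝ) : EReal) * z) : (y : EReal) ≤ z := by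
  have hs' : 0 < 1 - s := _root_.sub_pos.2 hs
  induction z using EReal.rec with
  | bot => rwa [coe_mul_bot_of_pos hs', add_bot] at h
  | top => exact le_top
  | coe z =>
    rw [← EReal.coe_mul, ← EReal.coe_mul, ← EReal.coe_add, EReal.coe_le_coe_iff] at h
    exact EReal.coe_le_coe_iff.2 (by nlinarith)

lemma coe_mul_ne_top_of_nonneg {t : ℝ} (ht : 0 ≤ t) {x : EReal} (hx : x ≠ ⊤) :
    (t : EReal) * x ≠ ⊤ :=
  (mul_ne_top _ _).2
    ⟨.inl (coe_ne_bot t), .inl (EReal.coe_nonneg.2 ht), .inl (coe_ne_top t), .inr hx⟩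

end EReal

section IntegerPoints

variable {n : ℕ}

lemma eq_of_mem_intNbhd_realify {y z : Fin n → ℤ} (h : y ∈ intNbhd (realify z)) : y = z := by
  funext i
  have hi : |((z i - y i : ℤ) : ℝ)| < 1 := by simpa [realify] using h i
  rw [← Int.cast_abs, ← Int.cast_one, Int.cast_lt, abs_lt] at hi
  omega

lemma localExt_realify (f : (Fin n → ℤ) → EReal) (z : Fin n → ℤ) :
    localExt f (realify z) = f z := by
  apply le_antisymm
  · refine sInf_le ⟨1, fun _ => 1, fun _ => z, fun _ => zero_le_one, by simp,
      fun _ i => by simp [realify], by simp [realify], by simp⟩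
  · refine le_sInf ?_
    rintro v ⟨m, lam, y, hnn, hsum, hnb, -, rfl⟩
    simp only [eq_of_mem_intNbhd_realify (hnb _)]
    rw [EReal.sum_coe_mul_of_nonneg _ (fun j _ => hnn j), hsum, EReal.coe_one, one_mul]

lemma IsIntegrallyConvexFn.apply_le_of_realify_eq {f : (Fin n → ℤ) → EReal}
    (hf : IsIntegrallyConvexFn f) {x y z : Fin n → ℤ} {t : ℝ} (ht0 : 0 ≤ t) (ht1 : t ≤ 1)
    (hz : realify z = fun i => t * realify x i + (1 - t) * realify y i) :
    f z ≤ (t : EReal) * f x + ((1 - t : ℝ) : EReal) * f y := by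
  simpa only [← hz, localExt_realify] using hf (realify x) (realify y) t ht0 ht1

end IntegerPoints

def IsDiscreteConvex (g : ℤ → EReal) : Prop :=
  ∀ a b c : ℤ, ∀ t : ℝ, 0 ≤ t → t ≤ 1 → (c : ℝ) = t * a + (1 - t) * b →
    g c ≤ (t : EReal) * g a + ((1 - t : ℝ) : EReal) * g b

lemma IsIntegrallyConvexFn.isDiscreteConvex_comp_smul {n : ℕ} {f : (Fin n → ℤ) → EReal}
    (hf : IsIntegrallyConvexFn f) (d : Fin n → ℤ) : IsDiscreteConvex fun k : ℤ => f (k • d) :=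
  fun a b c t ht0 ht1 hc => hf.apply_le_of_realify_eq ht0 ht1 <| by
    funext i
    simp only [realify, Pi.smul_apply, smul_eq_mul, Int.cast_mul, hc]
    ring

lemma exists_weight_of_le_of_le {a b c : ℤ} (hac : a ≤ c) (hcb : c ≤ b) :
    ∃ t : ℝ, 0 ≤ t ∧ t ≤ 1 ∧ (c : ℝ) = t * a + (1 - t) * b ∧ (a < c → t < 1) := by
  rcases hac.lt_or_eq with hac | rfl
  · have hab : (0 : ℝ) < b - a := sub_pos.2 (by exact_mod_cast hac.trans_le hcb)
    have hac' : (a : ℝ) < c := by exact_mod_cast hac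
    have hcb' : (c : ℝ) ≤ b := by exact_mod_cast hcb
    refine ⟨(b - c) / (b - a), div_nonneg (by linarith) hab.le, (div_le_one hab).2 (by linarith),
      by field_simp; ring, fun _ => (div_lt_one hab).2 (by linarith)⟩
  · exact ⟨1, zero_le_one, le_rfl, by ring, fun h => absurd h (lt_irrefl _)⟩

namespace IsDiscreteConvex

variable {g : ℤ → EReal} {a b c : ℤ}

lemma ne_top_of_le_of_le (hg : IsDiscreteConvex g) (hac : a ≤ c) (hcb : c ≤ b)
    (ha : g a ≠ ⊤) (hb : g b ≠ ⊤) : g c ≠ ⊤ := by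
  obtain ⟨t, ht0, ht1, hc, -⟩ := exists_weight_of_le_of_le hac hcb
  exact ne_top_of_le_ne_top (EReal.add_ne_top (EReal.coe_mul_ne_top_of_nonneg ht0 ha)
    (EReal.coe_mul_ne_top_of_nonneg (sub_nonneg.2 ht1) hb)) (hg a b c t ht0 ht1 hc)

lemma apply_le_right_of_left_le (hg : IsDiscreteConvex g) (hac : a ≤ c) (hcb : c ≤ b)
    (h : g a ≤ g b) : g c ≤ g b := by
  obtain ⟨t, ht0, ht1, hc, -⟩ := exists_weight_of_le_of_le hac hcb
  calc g c ≤ (t : EReal) * g a + ((1 - t : ℝ) : EReal) * g b := hg a b c t ht0 ht1 hc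
    _ ≤ (t : EReal) * g b + ((1 - t : ℝ) : EReal) * g b := by gcongr
    _ = g b := EReal.coe_mul_add_coe_one_sub_mul ht0 ht1 _

lemma apply_le_of_apply_le_of_lt (hg : IsDiscreteConvex g) (hab : a < b) (hbc : b ≤ c)
    (h : g a ≤ g b) (hb : g b ≠ ⊤) : g b ≤ g c := by
  obtain ⟨s, hs0, hs1, hb', hs⟩ := exists_weight_of_le_of_le hab.le hbc
  have key : g b ≤ (s : EReal) * g b + ((1 - s : ℝ) : EReal) * g c := by
    refine (hg a c b s hs0 hs1 hb').trans ?_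
    gcongr
  by_cases hbot : g b = ⊥
  · simp [hbot]
  lift g b to ℝ using ⟨hb, hbot⟩ with y
  exact EReal.coe_le_of_le_coe_mul_add (hs hab) key

lemma apply_sub_one_le (hg : IsDiscreteConvex g) {α L : ℤ} (h0 : g 0 ≠ ⊤) (hα : 0 < α)
    (hmono : g 0 ≤ g α) (hL : α - 1 ≤ L) : g (α - 1) ≤ g L := by
  obtain rfl | hL := hL.eq_or_lt
  · exact le_rfl
  by_cases hLtop : g L = ⊤
  · simp [hLtop]
  have hαtop : g α ≠ ⊤ := hg.ne_top_of_le_of_le hα.le (by omega) h0 hLtop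
  have hstep : g (α - 1) ≤ g α := hg.apply_le_right_of_left_le (by omega) (by omega) hmono
  exact hstep.trans (hg.apply_le_of_apply_le_of_lt (sub_one_lt α) (by omega) hstep hαtop)

end IsDiscreteConvex

theorem value_along_characteristic_vector_general {n : ℕ}
    (f : (Fin n → ℤ) → EReal)
    (hf : IsIntegrallyConvexFn f)
    (h0 : f 0 ≠ ⊤)
    (α : ℕ) (hα : 0 < α)
    (hloc : ∀ A : Finset (Fin n),
      f 0 ≤ f (fun i => if i ∈ A then (α : ℤ) else 0)) :
    ∀ A : Finset (Fin n), A.Nonempty → ∀ lam : ℕ,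
      (∀ i, (if i ∈ A then (α : ℤ) - 1 else 0) ≤
            (if i ∈ A then (α : ℤ) - 1 + (lam : ℤ) else 0)) ∧
      f (fun i => if i ∈ A then (α : ℤ) - 1 else 0) ≤
        f (fun i => if i ∈ A then (α : ℤ) - 1 + (lam : ℤ) else 0) := by
  intro A _ lam
  refine ⟨fun i => by split_ifs <;> omega, ?_⟩
  set d : Fin n → ℤ := fun i => if i ∈ A then 1 else 0
  have hline : ∀ k : ℤ, (fun i => if i ∈ A then k else 0) = k • d := fun k => by
    ext i
    simp [d]
  have hg := hf.isDiscreteConvex_comp_smul d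
  have hg0 : f ((0 : ℤ) • d) ≠ ⊤ := by rwa [zero_smul]
  have hmono : f ((0 : ℤ) • d) ≤ f ((α : ℤ) • d) := by
    rw [zero_smul, ← hline]
    exact hloc A
  rw [hline, hline]
  exact hg.apply_sub_one_le hg0 (by exact_mod_cast hα) hmono (by omega)

/-- Along the direction of a characteristic vector, the value at (α−1)·𝟙_A is a
minimum among (α−1+λ)·𝟙_A. -/
theorem value_along_characteristic_vector {n : ℕ}
    (f : (Fin n → ℤ) → EReal) (hbot : ∀ x, f x ≠ ⊥)
    (hf : IsIntegrallyConvexFn f)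
    (hpos : ∀ x, f x ≠ ⊤ → ∀ i, 0 ≤ x i)
    (h0 : f 0 ≠ ⊤)
    (α : ℕ) (hα : 0 < α)
    (hloc : ∀ A : Finset (Fin n),
      f 0 ≤ f (fun i => if i ∈ A then (α : ℤ) else 0)) :
    ∀ A : Finset (Fin n), A.Nonempty → ∀ lam : ℕ,
      (∀ i, (if i ∈ A then (α : ℤ) - 1 else 0) ≤
            (if i ∈ A then (α : ℤ) - 1 + (lam : ℤ) else 0)) ∧
      f (fun i => if i ∈ A then (α : ℤ) - 1 else 0) ≤
        f (fun i => if i ∈ A then (α : ℤ) - 1 + (lam : ℤ) else 0) :=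
  value_along_characteristic_vector_general f hf h0 α hα hloc
end
end

section
/- There exists an integrally convex function f : ℤ³ → ℝ ∪ {+∞} such that the scaled function f²(x) = f(2x) is not integrally convex. Specifically, one may take f with dom f = [0,4]×[0,2]×[0,2] given by explicit values, and the failure is witnessed by the midpoint condition at x=(0,0,0), y=(2,1,1) for f². -/
open scoped BigOperators

noncomputable section

/-!
The counterexample is the indicator function (`0` on `S`, `⊤` off `S`) of the set
`S = exampleSet` of the fifteen lattice points of a polytope `A z ≤ b`. Such an indicator is
integrally convex as soon as `S` is an integrally convex set. For `S` this is checked by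
triangulating `conv S` into unimodular simplices such that every vertex carrying positive
barycentric weight at a point `x` lies in the integer neighbourhood of `x`; the symmetries
`z ↦ (z₀, z₂, z₁)` and `z ↦ (4 - z₀, 2 - z₂, 2 - z₁)` of `S` reduce this to the quarter
`x₂ ≤ x₁`, `x₀ ≤ 2`, which seven simplices cover.

The scaled function is the indicator of `{z | 2z ∈ S}`. This set contains `0` and `(2, 1, 1)`, but
no point of the neighbourhood `{1} × {0, 1} × {0, 1}` of their midpoint `(1, 1/2, 1/2)`.
-/

open Set Matrix

section General

variable {n : ℕ}

lemma mem_convexHull_image_realify {T : Set (Fin n → ℤ)} {x : Fin n → ℝ} {m : ℕ}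
    (w : Fin m → ℝ) (z : Fin m → Fin n → ℤ) (hw₀ : ∀ j, 0 ≤ w j) (hw₁ : ∑ j, w j = 1)
    (hz : ∀ j, 0 < w j → z j ∈ T) (hx : ∀ i, ∑ j, w j * (z j i : ℝ) = x i) :
    x ∈ convexHull ℝ (realify '' T) := by
  classical
  have hpos : ∀ j, w j ≠ 0 → 0 < w j := fun j hj => (hw₀ j).lt_of_ne' hj
  have hx' : ∑ j with 0 < w j, w j • realify (z j) = x := by
    rw [Finset.sum_filter_of_ne fun j _ hj => hpos j (left_ne_zero_of_smul hj)]
    ext i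
    simp only [Finset.sum_apply, Pi.smul_apply, realify, smul_eq_mul, hx]
  rw [← hx']
  refine (convex_convexHull ℝ _).sum_mem (fun j _ => hw₀ j) ?_ fun j hj =>
    subset_convexHull ℝ _ (mem_image_of_mem _ (hz j (Finset.mem_filter.1 hj).2))
  rwa [Finset.sum_filter_of_ne fun j _ hj => hpos j hj]

lemma exists_weights_of_mem_convexHull_image_realify {T : Set (Fin n → ℤ)} {x : Fin n → ℝ}
    (hx : x ∈ convexHull ℝ (realify '' T)) :
    ∃ (m : ℕ) (w : Fin m → ℝ) (z : Fin m → Fin n → ℤ), (∀ j, 0 ≤ w j) ∧ ∑ j, w j = 1 ∧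
      (∀ j, z j ∈ T) ∧ ∀ i, ∑ j, w j * (z j i : ℝ) = x i := by
  obtain ⟨ι, _, w, p, hw₀, hw₁, hp, rfl⟩ := mem_convexHull_iff_exists_fintype.1 hx
  choose z hzT hz using hp
  let e := (Fintype.equivFin ι).symm
  refine ⟨Fintype.card ι, w ∘ e, z ∘ e, fun j => hw₀ _, ?_, fun j => hzT _, fun i => ?_⟩
  · rw [← hw₁]
    exact e.sum_comp w
  · simp only [Finset.sum_apply, Pi.smul_apply, ← hz, realify, smul_eq_mul]
    exact e.sum_comp fun k => w k * (z k i : ℝ)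

lemma convexHull_image_realify_subset {ι : Type*} [Fintype ι]
    (A : Matrix ι (Fin n) ℤ) (b : ι → ℤ) :
    convexHull ℝ (realify '' {z | A *ᵥ z ≤ b}) ⊆
      {x | A.map (Int.cast : ℤ → ℝ) *ᵥ x ≤ fun k => (b k : ℝ)} := by
  refine convexHull_min ?_ (convex_halfSpace_le (A.map _).mulVecLin.isLinear _)
  rintro _ ⟨z, hz, rfl⟩ k
  have hcast := RingHom.map_mulVec (Int.castRingHom ℝ) A z k
  rw [Int.coe_castRingHom] at hcast
  change _ ≤ (b k : ℝ)
  rw [show realify z = Int.cast ∘ z from rfl, ← hcast]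
  exact Int.cast_le.2 (hz k)

lemma self_mem_intNbhd (z : Fin n → ℤ) : z ∈ intNbhd (realify z) := fun i => by
  simp [realify]

lemma mem_intNbhd_midpoint_iff {x y z : Fin n → ℤ} :
    z ∈ intNbhd (midpoint ℝ (realify x) (realify y)) ↔ ∀ i, |x i + y i - 2 * z i| ≤ 1 := by
  refine forall_congr' fun i => ?_
  have hmid : midpoint ℝ (realify x) (realify y) i - z i = (x i + y i - 2 * z i : ℤ) / 2 := by
    simp only [pi_midpoint_apply, realify, midpoint_eq_smul_add, invOf_eq_inv, smul_eq_mul]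
    push_cast
    ring
  rw [hmid, abs_div, abs_two, div_lt_one two_pos, ← Int.cast_abs]
  norm_cast
  rw [abs_lt, abs_le]
  omega

def convexIndicator (S : Set (Fin n → ℤ)) : (Fin n → ℤ) → EReal := Sᶜ.indicator ⊤

lemma convexIndicator_nonneg (S : Set (Fin n → ℤ)) (z : Fin n → ℤ) : 0 ≤ convexIndicator S z :=
  Set.indicator_nonneg (fun _ _ => le_top) z

lemma convexIndicator_ne_bot (S : Set (Fin n → ℤ)) (z : Fin n → ℤ) : convexIndicator S z ≠ ⊥ :=
  ne_bot_of_le_ne_bot EReal.zero_ne_bot (convexIndicator_nonneg S z)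

lemma convexIndicator_comp (S : Set (Fin n → ℤ)) (g : (Fin n → ℤ) → Fin n → ℤ) :
    (fun z => convexIndicator S (g z)) = convexIndicator (g ⁻¹' S) :=
  rfl

lemma localExt_nonneg {f : (Fin n → ℤ) → EReal} (hf : ∀ z, 0 ≤ f z) (x : Fin n → ℝ) :
    0 ≤ localExt f x := by
  refine le_sInf ?_
  rintro _ ⟨m, w, z, hw₀, -, -, -, rfl⟩
  exact Finset.sum_nonneg fun j _ => EReal.mul_nonneg (EReal.coe_nonneg.2 (hw₀ j)) (hf _)

open Classical in
lemma localExt_convexIndicator (S : Set (Fin n → ℤ)) (x : Fin n → ℝ) :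
    localExt (convexIndicator S) x =
      if x ∈ convexHull ℝ (realify '' (S ∩ intNbhd x)) then 0 else (⊤ : EReal) := by
  split_ifs with hx
  · refine le_antisymm ?_ (localExt_nonneg (convexIndicator_nonneg S) x)
    obtain ⟨m, w, z, hw₀, hw₁, hz, hzx⟩ := exists_weights_of_mem_convexHull_image_realify hx
    refine sInf_le ⟨m, w, z, hw₀, hw₁, fun j => (hz j).2, hzx, ?_⟩
    simp [convexIndicator, Set.indicator_of_notMem, (hz _).1]
  · rw [localExt, sInf_eq_top]
    rintro _ ⟨m, w, z, hw₀, hw₁, hzN, hzx, rfl⟩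
    obtain ⟨j, hj, hjS⟩ : ∃ j, 0 < w j ∧ z j ∉ S := by
      by_contra! h
      exact hx (mem_convexHull_image_realify w z hw₀ hw₁ (fun j hj => ⟨h j hj, hzN j⟩) hzx)
    refine top_le_iff.1 (le_trans (le_of_eq ?_) (Finset.single_le_sum (fun k _ =>
      EReal.mul_nonneg (EReal.coe_nonneg.2 (hw₀ k)) (convexIndicator_nonneg S _))
      (Finset.mem_univ j)))
    rw [convexIndicator, Set.indicator_of_mem (show z j ∈ Sᶜ from hjS), Pi.top_apply,
      EReal.mul_top_of_pos (EReal.coe_pos.2 hj)]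

theorem IsIntegrallyConvexSet.isIntegrallyConvexFn_convexIndicator {S : Set (Fin n → ℤ)}
    (hS : IsIntegrallyConvexSet S) : IsIntegrallyConvexFn (convexIndicator S) := by
  intro x y t ht₀ ht₁
  rcases ht₀.eq_or_lt with rfl | ht₀
  · simp
  rcases ht₁.eq_or_lt with rfl | ht₁
  · simp
  have hpos : (0 : EReal) < t := EReal.coe_pos.2 ht₀
  set s := 1 - t
  have hpos' : (0 : EReal) < s := EReal.coe_pos.2 (sub_pos.2 ht₁)
  simp only [localExt_convexIndicator]
  by_cases hx : x ∈ convexHull ℝ (realify '' (S ∩ intNbhd x))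
  · by_cases hy : y ∈ convexHull ℝ (realify '' (S ∩ intNbhd y))
    · have hmix : (fun i => t * x i + s * y i) ∈ convexHull ℝ (realify '' S) :=
        convex_convexHull ℝ _ (convexHull_mono (image_mono inter_subset_left) hx)
          (convexHull_mono (image_mono inter_subset_left) hy) ht₀.le (sub_pos.2 ht₁).le
          (add_sub_cancel t 1)
      simp [hS _ hmix, hx, hy]
    · simp [hx, hy, EReal.mul_top_of_pos hpos']
  · split_ifs <;> simp [EReal.mul_top_of_pos hpos, EReal.mul_top_of_pos hpos']

lemma not_isIntegrallyConvexFn_convexIndicator {S : Set (Fin n → ℤ)} {x y : Fin n → ℤ}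
    (hx : x ∈ S) (hy : y ∈ S)
    (hmid : ∀ z ∈ intNbhd (midpoint ℝ (realify x) (realify y)), z ∉ S) :
    ¬ IsIntegrallyConvexFn (convexIndicator S) := by
  intro h
  have hself : ∀ z ∈ S, realify z ∈ convexHull ℝ (realify '' (S ∩ intNbhd (realify z))) :=
    fun z hz => subset_convexHull ℝ _ ⟨z, ⟨hz, self_mem_intNbhd z⟩, rfl⟩
  have hempty : S ∩ intNbhd (midpoint ℝ (realify x) (realify y)) = ∅ :=
    eq_empty_of_forall_notMem fun z hz => hmid z hz.2 hz.1
  have hmid_eq : (fun i => (1 / 2 : ℝ) * realify x i + (1 - 1 / 2) * realify y i) =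
      midpoint ℝ (realify x) (realify y) := by
    ext i
    simp only [pi_midpoint_apply, midpoint_eq_smul_add, invOf_eq_inv, smul_eq_mul]
    ring
  have := h (realify x) (realify y) (1 / 2) (by norm_num) (by norm_num)
  rw [hmid_eq] at this
  simp [localExt_convexIndicator, hself x hx, hself y hy, hempty] at this

lemma signedPerm_mem_convexHull {T T' : Set (Fin n → ℤ)} (c : Fin n → ℤ) (ε : ℤ)
    (σ : Fin n → Fin n) (hT : ∀ z ∈ T, c + ε • (z ∘ σ) ∈ T') {x : Fin n → ℝ}
    (hx : x ∈ convexHull ℝ (realify '' T)) :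
    realify c + (ε : ℝ) • (x ∘ σ) ∈ convexHull ℝ (realify '' T') := by
  let φ : (Fin n → ℝ) →ᵃ[ℝ] (Fin n → ℝ) :=
    AffineMap.const ℝ _ (realify c) + (ε : ℝ) • (LinearMap.funLeft ℝ ℝ σ).toAffineMap
  have hφ : ∀ v, φ v = realify c + (ε : ℝ) • (v ∘ σ) := fun v => rfl
  rw [← hφ]
  refine convexHull_mono ?_ (φ.image_convexHull _ ▸ mem_image_of_mem φ hx)
  rintro _ ⟨_, ⟨z, hz, rfl⟩, rfl⟩
  refine ⟨_, hT z hz, ?_⟩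
  ext i
  simp [hφ, realify]

lemma signedPerm_mem_convexHull_inter_intNbhd {S : Set (Fin n → ℤ)} (c : Fin n → ℤ) {ε : ℤ}
    (hε : |ε| = 1) (σ : Fin n → Fin n) (hS : ∀ z ∈ S, c + ε • (z ∘ σ) ∈ S) {x : Fin n → ℝ}
    (hx : x ∈ convexHull ℝ (realify '' (S ∩ intNbhd x))) :
    realify c + (ε : ℝ) • (x ∘ σ) ∈
      convexHull ℝ (realify '' (S ∩ intNbhd (realify c + (ε : ℝ) • (x ∘ σ)))) := by
  refine signedPerm_mem_convexHull c ε σ (fun z (hz : z ∈ S ∩ intNbhd x) =>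
    (⟨hS z hz.1, fun i => ?_⟩ : _ ∈ S ∩ intNbhd _)) hx
  have hεR : |(ε : ℝ)| = 1 := by exact_mod_cast hε
  calc |(realify c + (ε : ℝ) • (x ∘ σ)) i - ((c + ε • (z ∘ σ)) i : ℝ)|
      = |(ε : ℝ)| * |x (σ i) - z (σ i)| := by
        simp [realify, ← abs_mul]
        ring_nf
    _ < 1 := by simpa [hεR] using hz.2 (σ i)

end General

def exampleSet : Set (Fin 3 → ℤ) :=
  {z | !![-1, 1, 0; -1, 0, 1; -1, 1, 1; 0, -1, 0; 0, -1, 1; 0, 0, -1;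
          0, 0, 1; 0, 1, -1; 0, 1, 0; 1, -1, -1; 1, -1, 0; 1, 0, -1] *ᵥ z ≤
        ![0, 0, 1, 0, 1, 0, 2, 1, 2, 1, 2, 2]}

instance : DecidablePred (· ∈ exampleSet) := fun _ => inferInstanceAs (Decidable (∀ _, _ ≤ _))

lemma mem_convexHull_inter_intNbhd_of_le_two {x : Fin 3 → ℝ}
    (hx : x ∈ convexHull ℝ (realify '' exampleSet)) (h₂₁ : x 2 ≤ x 1) (h₀ : x 0 ≤ 2) :
    x ∈ convexHull ℝ (realify '' (exampleSet ∩ intNbhd x)) := by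
  have hP := convexHull_image_realify_subset _ _ hx
  simp [Pi.le_def, Fin.forall_fin_succ, mulVec, dotProduct, Fin.sum_univ_succ] at hP
  obtain ⟨_, _, _, _, _, _, _, _, _, _, _, _⟩ := hP
  -- `w` lists the barycentric coordinates of `x` in a triangulation of this quarter of `conv S`.
  have simplex (w : Fin 4 → ℝ) (z : Fin 4 → Fin 3 → ℤ)
      (h : (∀ j, 0 ≤ w j) ∧ ∑ j, w j = 1 ∧ (∀ j, 0 < w j → z j ∈ exampleSet ∩ intNbhd x) ∧
        ∀ i, ∑ j, w j * (z j i : ℝ) = x i) :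
      x ∈ convexHull ℝ (realify '' (exampleSet ∩ intNbhd x)) :=
    mem_convexHull_image_realify w z h.1 h.2.1 h.2.2.1 h.2.2.2
  refine (le_total (x 0) 1).elim
    (fun _ => simplex ![1 - x 0, x 0 - x 1, x 1 - x 2, x 2]
      ![![0, 0, 0], ![1, 0, 0], ![1, 1, 0], ![1, 1, 1]] ?_) fun _ =>
    (le_total (x 1) 1).elim
      (fun _ => (le_total (x 0 - 1) (x 2)).elim
        (fun _ => simplex ![1 - x 1, x 1 - x 2, x 2 - x 0 + 1, x 0 - 1]
          ![![1, 0, 0], ![1, 1, 0], ![1, 1, 1], ![2, 1, 1]] ?_) fun _ =>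
        (le_total (x 1) (x 0 - 1)).elim
          (fun _ => simplex
            ![2 - x 0, x 0 - 1 - x 2, x 0 - 1 - x 1, x 1 + x 2 - x 0 + 1]
            ![![1, 0, 0], ![2, 1, 0], ![2, 0, 1], ![2, 1, 1]] ?_) fun _ =>
          simplex ![1 - x 1, x 1 - x 0 + 1, x 0 - 1 - x 2, x 2]
            ![![1, 0, 0], ![1, 1, 0], ![2, 1, 0], ![2, 1, 1]] ?_)
      fun _ => (le_total 1 (x 2)).elim
        (fun _ => simplex ![2 - x 0, x 1 - 1, x 2 - 1, x 0 + 1 - x 1 - x 2]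
          ![![1, 1, 1], ![2, 2, 1], ![2, 1, 2], ![2, 1, 1]] ?_) fun _ =>
        (le_total (x 0 - 1) (x 2)).elim
          (fun _ => simplex ![1 - x 2, x 2 - x 0 + 1, x 1 - 1, x 0 - x 1]
            ![![1, 1, 0], ![1, 1, 1], ![2, 2, 1], ![2, 1, 1]] ?_) fun _ =>
          simplex ![2 - x 0, x 0 - x 2 - 1, x 1 - 1, x 2 - x 1 + 1]
            ![![1, 1, 0], ![2, 1, 0], ![2, 2, 1], ![2, 1, 1]] ?_
  all_goals
    refine ⟨fun j => ?_, ?_, fun j hj => ?_, fun i => ?_⟩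
    · fin_cases j <;> simp <;> linarith
    · simp [Fin.sum_univ_four] <;> ring
    · fin_cases j <;> simp at hj <;>
        refine ⟨by decide, fun i => ?_⟩ <;>
        fin_cases i <;> simp <;> rw [abs_lt] <;> constructor <;> linarith
    · fin_cases i <;> simp [Fin.sum_univ_four] <;> ring

lemma swap_mem_exampleSet {z : Fin 3 → ℤ} (hz : z ∈ exampleSet) :
    0 + (1 : ℤ) • (z ∘ ![0, 2, 1]) ∈ exampleSet := by
  simp [exampleSet, Pi.le_def, Fin.forall_fin_succ, dotProduct, Fin.sum_univ_succ] at hz ⊢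
  omega

lemma flip_mem_exampleSet {z : Fin 3 → ℤ} (hz : z ∈ exampleSet) :
    ![4, 2, 2] + (-1 : ℤ) • (z ∘ ![0, 2, 1]) ∈ exampleSet := by
  simp [exampleSet, Pi.le_def, Fin.forall_fin_succ, dotProduct, Fin.sum_univ_succ,
    Function.comp_def, vecHead, vecTail] at hz ⊢
  omega

lemma mem_convexHull_inter_intNbhd_of_le {x : Fin 3 → ℝ}
    (hx : x ∈ convexHull ℝ (realify '' exampleSet)) (h₂₁ : x 2 ≤ x 1) :
    x ∈ convexHull ℝ (realify '' (exampleSet ∩ intNbhd x)) := by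
  rcases le_total (x 0) 2 with h₀ | h₀
  · exact mem_convexHull_inter_intNbhd_of_le_two hx h₂₁ h₀
  have hflip := signedPerm_mem_convexHull_inter_intNbhd ![4, 2, 2] (by norm_num) ![0, 2, 1]
    (fun _ => flip_mem_exampleSet) <| mem_convexHull_inter_intNbhd_of_le_two
      (signedPerm_mem_convexHull ![4, 2, 2] (-1) ![0, 2, 1] (fun _ => flip_mem_exampleSet) hx)
      (by simp [realify]; linarith) (by simp [realify]; linarith)
  have hinv : realify ![4, 2, 2] + ((-1 : ℤ) : ℝ) •
      ((realify ![4, 2, 2] + ((-1 : ℤ) : ℝ) • (x ∘ ![0, 2, 1])) ∘ ![0, 2, 1]) = x := by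
    ext i
    fin_cases i <;> simp [realify]
  rwa [hinv] at hflip

theorem isIntegrallyConvexSet_exampleSet : IsIntegrallyConvexSet exampleSet := by
  intro x hx
  rcases le_total (x 2) (x 1) with h₂₁ | h₁₂
  · exact mem_convexHull_inter_intNbhd_of_le hx h₂₁
  have hswap := signedPerm_mem_convexHull_inter_intNbhd 0 (by norm_num) ![0, 2, 1]
    (fun _ => swap_mem_exampleSet) <| mem_convexHull_inter_intNbhd_of_le
      (signedPerm_mem_convexHull 0 1 ![0, 2, 1] (fun _ => swap_mem_exampleSet) hx)
      (by simpa [realify])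
  have hinv : realify 0 + ((1 : ℤ) : ℝ) •
      ((realify 0 + ((1 : ℤ) : ℝ) • (x ∘ ![0, 2, 1])) ∘ ![0, 2, 1]) = x := by
    ext i
    fin_cases i <;> simp [realify]
  rwa [hinv] at hswap

lemma two_mul_notMem_exampleSet {z : Fin 3 → ℤ}
    (hz : z ∈ intNbhd (midpoint ℝ (realify 0) (realify ![2, 1, 1]))) :
    (fun i => 2 * z i) ∉ exampleSet := by
  intro hmem
  rw [mem_intNbhd_midpoint_iff] at hz
  have h₀ := hz 0
  have h₁ := hz 1
  have h₂ := hz 2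
  simp [abs_le] at h₀ h₁ h₂
  simp [exampleSet, Pi.le_def, Fin.forall_fin_succ, dotProduct, Fin.sum_univ_succ] at hmem
  omega

/-- For n = 3, integral convexity is not preserved by the scaling operation
with α = 2. -/
theorem scaling_fails_dim3 :
    ∃ f : (Fin 3 → ℤ) → EReal,
      (∀ x, f x ≠ ⊥) ∧ IsIntegrallyConvexFn f ∧
      ¬ IsIntegrallyConvexFn (fun x : Fin 3 → ℤ => f (fun i => 2 * x i)) := by
  refine ⟨convexIndicator exampleSet, convexIndicator_ne_bot _,
    isIntegrallyConvexSet_exampleSet.isIntegrallyConvexFn_convexIndicator, ?_⟩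
  have h₀ : (fun i => 2 * (0 : Fin 3 → ℤ) i) ∈ exampleSet := by decide
  have h₁ : (fun i => 2 * (![2, 1, 1] : Fin 3 → ℤ) i) ∈ exampleSet := by decide
  rw [convexIndicator_comp]
  exact not_isIntegrallyConvexFn_convexIndicator h₀ h₁ fun _ => two_mul_notMem_exampleSet

end
end

section
/- Let f : ℤⁿ → ℝ ∪ {+∞} satisfy discrete midpoint convexity f(x) + f(y) ≥ f(⌈(x+y)/2⌉) + f(⌊(x+y)/2⌋) for all x, y ∈ ℤⁿ. Then f satisfies translation-submodularity: f(x) + f(y) ≥ f((x − μ𝟙) ∨ y) + f(x ∧ (y + μ𝟙)) for all x, y ∈ ℤⁿ and all nonnegative integers μ, where ∨ and ∧ denote componentwise max and min and 𝟙 = (1,…,1). -/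
/-! Submodularity `f (x ⊔ y) + f (x ⊓ y) ≤ f x + f y` follows from midpoint convexity by
induction on `max_i |x i - y i|`: with `p = ⌈(x+y)/2⌉`, `q = ⌊(x+y)/2⌋`, the four pairs
`(x, q)`, `(p, y)`, `(x ⊔ q, p ⊔ y)`, `(x ⊓ q, p ⊓ y)` are closer together, and adding their
submodular inequalities to midpoint convexity for `((x ⊔ q) ⊓ (p ⊔ y), (x ⊓ q) ⊔ (p ⊓ y))`,
whose midpoints are again `p` and `q`, leaves the claim plus `f p + f q` on both sides.

Translation-submodularity is submodularity of `g z = f (z ∘ some - z none)` on `ℤ^(Option ι)`, at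
the points `(0, x)` and `(μ, y + μ𝟙)`; `g` inherits midpoint convexity because shifting by
`z none` commutes with the rounded midpoints, up to swapping them when `z none + w none` is
odd. -/

open scoped BigOperators

noncomputable section

namespace DiscreteConvex

variable {ι : Type*}

def ceilMid (x y : ι → ℤ) : ι → ℤ := fun i => Int.fdiv (x i + y i + 1) 2

def floorMid (x y : ι → ℤ) : ι → ℤ := fun i => Int.fdiv (x i + y i) 2

@[simp]
lemma ceilMid_apply (x y : ι → ℤ) (i : ι) : ceilMid x y i = (x i + y i + 1) / 2 :=
  Int.fdiv_eq_ediv_of_nonneg _ zero_le_two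

@[simp]
lemma floorMid_apply (x y : ι → ℤ) (i : ι) : floorMid x y i = (x i + y i) / 2 :=
  Int.fdiv_eq_ediv_of_nonneg _ zero_le_two

lemma ceilMid_eq_sup {x y : ι → ℤ} (h : ∀ i, (x i - y i).natAbs ≤ 1) :
    ceilMid x y = x ⊔ y := by
  funext i
  have := h i
  simp only [ceilMid_apply, Pi.sup_apply]
  omega

lemma floorMid_eq_inf {x y : ι → ℤ} (h : ∀ i, (x i - y i).natAbs ≤ 1) :
    floorMid x y = x ⊓ y := by
  funext i
  have := h i
  simp only [floorMid_apply, Pi.inf_apply]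
  omega

def IsMidpointConvex (f : (ι → ℤ) → EReal) : Prop :=
  ∀ x y, f (ceilMid x y) + f (floorMid x y) ≤ f x + f y

section Submodular

variable {f : (ι → ℤ) → EReal}

lemma sup_add_inf_le_of_midpoints (hbot : ∀ x, f x ≠ ⊥) (hf : IsMidpointConvex f)
    {x y : ι → ℤ}
    (hxq : f (x ⊔ floorMid x y) + f (x ⊓ floorMid x y) ≤ f x + f (floorMid x y))
    (hpy : f (ceilMid x y ⊔ y) + f (ceilMid x y ⊓ y) ≤ f (ceilMid x y) + f y)
    (hsup : f ((x ⊔ floorMid x y) ⊔ (ceilMid x y ⊔ y)) +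
        f ((x ⊔ floorMid x y) ⊓ (ceilMid x y ⊔ y)) ≤
      f (x ⊔ floorMid x y) + f (ceilMid x y ⊔ y))
    (hinf : f ((x ⊓ floorMid x y) ⊔ (ceilMid x y ⊓ y)) +
        f ((x ⊓ floorMid x y) ⊓ (ceilMid x y ⊓ y)) ≤
      f (x ⊓ floorMid x y) + f (ceilMid x y ⊓ y)) :
    f (x ⊔ y) + f (x ⊓ y) ≤ f x + f y := by
  set p := ceilMid x y
  set q := floorMid x y
  set r := (x ⊔ q) ⊓ (p ⊔ y)
  set r' := (x ⊓ q) ⊔ (p ⊓ y)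
  have hsup_eq : (x ⊔ q) ⊔ (p ⊔ y) = x ⊔ y := by
    funext i
    simp only [p, q, ceilMid_apply, floorMid_apply, Pi.sup_apply]
    omega
  have hinf_eq : (x ⊓ q) ⊓ (p ⊓ y) = x ⊓ y := by
    funext i
    simp only [p, q, ceilMid_apply, floorMid_apply, Pi.inf_apply]
    omega
  have hceil : ceilMid r r' = p := by
    funext i
    simp only [r, r', p, q, ceilMid_apply, floorMid_apply, Pi.sup_apply, Pi.inf_apply]
    omega
  have hfloor : floorMid r r' = q := by
    funext i
    simp only [r, r', p, q, ceilMid_apply, floorMid_apply, Pi.sup_apply, Pi.inf_apply]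
    omega
  rw [hsup_eq] at hsup
  rw [hinf_eq] at hinf
  have hrr' : f p + f q ≤ f r + f r' := hceil ▸ hfloor ▸ hf r r'
  by_cases htop : f p + f q = ⊤
  · exact le_top.trans_eq (top_le_iff.mp (htop ▸ hf x y)).symm
  obtain ⟨s, hs⟩ : ∃ s : ℝ, (s : EReal) = f p + f q :=
    ⟨_, EReal.coe_toReal htop (EReal.add_ne_bot_iff.mpr ⟨hbot p, hbot q⟩)⟩
  refine (EReal.addLECancellable_coe s).add_le_add_iff_right.mp ?_
  calc f (x ⊔ y) + f (x ⊓ y) + s ≤ f (x ⊔ y) + f (x ⊓ y) + (f r + f r') := by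
        rw [hs]; gcongr
    _ = (f (x ⊔ y) + f r) + (f r' + f (x ⊓ y)) := by abel
    _ ≤ (f (x ⊔ q) + f (p ⊔ y)) + (f (x ⊓ q) + f (p ⊓ y)) := add_le_add hsup hinf
    _ = (f (x ⊔ q) + f (x ⊓ q)) + (f (p ⊔ y) + f (p ⊓ y)) := by abel
    _ ≤ (f x + f q) + (f p + f y) := add_le_add hxq hpy
    _ = f x + f y + s := by rw [hs]; abel

lemma sup_add_inf_le_of_natAbs_sub_le (hbot : ∀ x, f x ≠ ⊥) (hf : IsMidpointConvex f) (D : ℕ) :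
    ∀ x y : ι → ℤ, (∀ i, (x i - y i).natAbs ≤ D) → f (x ⊔ y) + f (x ⊓ y) ≤ f x + f y := by
  induction D using Nat.strong_induction_on with
  | _ D ih =>
  intro x y hxy
  by_cases hnear : ∀ i, (x i - y i).natAbs ≤ 1
  · simpa only [ceilMid_eq_sup hnear, floorMid_eq_inf hnear] using hf x y
  obtain ⟨i₀, hi₀⟩ := not_forall.mp hnear
  have hD : 2 ≤ D := by have := hxy i₀; omega
  refine sup_add_inf_le_of_midpoints hbot hf
    (ih (D - 1) (by omega) _ _ fun i => ?_) (ih (D - 1) (by omega) _ _ fun i => ?_)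
    (ih (D - 1) (by omega) _ _ fun i => ?_) (ih (D - 1) (by omega) _ _ fun i => ?_) <;>
  · have := hxy i
    simp only [ceilMid_apply, floorMid_apply, Pi.sup_apply, Pi.inf_apply]
    omega

variable [Fintype ι]

theorem IsMidpointConvex.sup_add_inf_le (hbot : ∀ x, f x ≠ ⊥) (hf : IsMidpointConvex f)
    (x y : ι → ℤ) : f (x ⊔ y) + f (x ⊓ y) ≤ f x + f y :=
  sup_add_inf_le_of_natAbs_sub_le hbot hf (∑ i, (x i - y i).natAbs) x y fun i =>
    Finset.single_le_sum (f := fun j => (x j - y j).natAbs) (fun _ _ => Nat.zero_le _)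
      (Finset.mem_univ i)

end Submodular

def homogenize (f : (ι → ℤ) → EReal) : (Option ι → ℤ) → EReal :=
  fun z => f (fun i => z (some i) - z none)

def homogenizePoint (c : ℤ) (x : ι → ℤ) : Option ι → ℤ :=
  fun o => o.elim c (fun i => x i + c)

lemma homogenize_homogenizePoint (f : (ι → ℤ) → EReal) (c : ℤ) (x : ι → ℤ) :
    homogenize f (homogenizePoint c x) = f x := by
  simp [homogenize, homogenizePoint]

lemma isMidpointConvex_homogenize {f : (ι → ℤ) → EReal} (hf : IsMidpointConvex f) :
    IsMidpointConvex (homogenize f) := by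
  intro z w
  set a : ι → ℤ := fun i => z (some i) - z none
  set b : ι → ℤ := fun i => w (some i) - w none
  rcases Int.emod_two_eq_zero_or_one (z none + w none) with hpar | hpar
  · have hceil : (fun i => ceilMid z w (some i) - ceilMid z w none) = ceilMid a b := by
      funext i; simp only [a, b, ceilMid_apply]; omega
    have hfloor : (fun i => floorMid z w (some i) - floorMid z w none) = floorMid a b := by
      funext i; simp only [a, b, floorMid_apply]; omega
    simpa only [homogenize, hceil, hfloor] using hf a b
  · have hceil : (fun i => ceilMid z w (some i) - ceilMid z w none) = floorMid a b := by
      funext i; simp only [a, b, ceilMid_apply, floorMid_apply]; omega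
    have hfloor : (fun i => floorMid z w (some i) - floorMid z w none) = ceilMid a b := by
      funext i; simp only [a, b, ceilMid_apply, floorMid_apply]; omega
    simpa only [homogenize, hceil, hfloor, add_comm (f (floorMid a b))] using hf a b

lemma homogenizePoint_zero_sup (x y : ι → ℤ) (μ : ℕ) :
    homogenizePoint 0 x ⊔ homogenizePoint μ y = homogenizePoint μ ((x - μ • 1) ⊔ y) := by
  funext o
  cases o with
  | none => simp [homogenizePoint]
  | some i => simp [homogenizePoint]; omega

lemma homogenizePoint_zero_inf (x y : ι → ℤ) (μ : ℕ) :
    homogenizePoint 0 x ⊓ homogenizePoint μ y = homogenizePoint 0 (x ⊓ (y + μ • 1)) := by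
  funext o
  cases o <;> simp [homogenizePoint]

end DiscreteConvex

open DiscreteConvex

/-- Discrete midpoint convexity implies translation-submodularity. -/
theorem discrete_midpoint_convexity_implies_translation_submodularity {n : ℕ}
    (f : (Fin n → ℤ) → EReal) (hbot : ∀ x, f x ≠ ⊥)
    (hmid : ∀ x y : Fin n → ℤ,
      f (fun i => Int.fdiv (x i + y i + 1) 2) + f (fun i => Int.fdiv (x i + y i) 2) ≤
        f x + f y) :
    ∀ x y : Fin n → ℤ, ∀ μ : ℕ,
      f ((x - μ • (1 : Fin n → ℤ)) ⊔ y) + f (x ⊓ (y + μ • (1 : Fin n → ℤ))) ≤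
        f x + f y := by
  intro x y μ
  have hsub := IsMidpointConvex.sup_add_inf_le (f := homogenize f) (fun _ => hbot _)
    (isMidpointConvex_homogenize hmid) (homogenizePoint 0 x) (homogenizePoint μ y)
  simpa only [homogenizePoint_zero_sup, homogenizePoint_zero_inf,
    homogenize_homogenizePoint] using hsub
end
end
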